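/- As λ → 0⁺, the until-N branching-based kernel of order h converges to the sum of walk-count kernels of lengths 0 through h−1: lim_{λ→0} K^{until-h}_Branch(G_1,G_2) = Σ_{n=0}^{h−1} K^n_Walk(G_1,G_2). -/

import Mathlib

open scoped Classical

/-- A finite labeled directed graph: vertices `V`, edge relation `E`, vertex
labels `lv` and edge labels `le`, all labels taken in the alphabet `A`. -/
structure LGraph (A : Type) where
  V : Type
  [fintypeV : Fintype V]
  [decEqV : DecidableEq V]
  E : V → V → Prop
  [decE : DecidableRel E]
  lv : V → A
  le : V → V → A

attribute [instance] LGraph.fintypeV LGraph.decEqV LGraph.decE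

/-- A labeled rooted tree: a root label together with the list of children,
each child carrying the label of the edge connecting it to its parent and
the corresponding labeled subtree. -/
inductive LTree (A : Type) : Type where
  | node : A → List (A × LTree A) → LTree A

namespace LTree

variable {A : Type}

-- `size t` : number of nodes
mutual
def size : LTree A → ℕ
  | .node _ cs => 1 + sizeList cs
def sizeList : List (A × LTree A) → ℕ
  | [] => 0
  | (_, t) :: rest => size t + sizeList rest
end

-- `depth t` : maximal number of edges from the root to a node, plus one
mutual
def depth : LTree A → ℕ
  | .node _ cs => 1 + depthList cs
def depthList : List (A × LTree A) → ℕ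
  | [] => 0
  | (_, t) :: rest => max (depth t) (depthList rest)
end

-- `leaves t` : number of leaf nodes
mutual
def leaves : LTree A → ℕ
  | .node _ [] => 1
  | .node _ (c :: cs) => leavesList (c :: cs)
def leavesList : List (A × LTree A) → ℕ
  | [] => 0
  | (_, t) :: rest => leaves t + leavesList rest
end

/-- branching cardinality: number of leaves minus one -/
def branch (t : LTree A) : ℕ := t.leaves - 1

-- `balanced t h` : `t` is perfectly depth-balanced of order `h` (every leaf at depth `h`)
mutual
def balanced : LTree A → ℕ → Prop
  | .node _ [], h => h = 1
  | .node _ (c :: cs), h => balancedList (c :: cs) (h - 1) ∧ 2 ≤ h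
def balancedList : List (A × LTree A) → ℕ → Prop
  | [], _ => True
  | (_, t) :: rest, h => balanced t h ∧ balancedList rest h
end

end LTree

/-- A tree of graph vertices: the candidate images of the nodes of a tree
under a tree-pattern. -/
inductive VTree (V : Type) : Type where
  | node : V → List (VTree V) → VTree V

namespace VTree

variable {V : Type}

/-- the vertex at the root -/
def root : VTree V → V
  | .node u _ => u

/-- the list of subtrees at the root -/
def children : VTree V → List (VTree V)
  | .node _ ps => ps

end VTree

/-- `isPattern G t p` : the decoration `p` of the tree `t` by vertices of `G` is a
tree-pattern of `G` with respect to `t`: node labels match, every tree edge is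
realized by an edge of `G` with matching label, and sibling nodes are mapped to
distinct vertices. -/
def isPattern {A : Type} (G : LGraph A) : LTree A → VTree G.V → Prop
  | .node a cs, .node u ps =>
    G.lv u = a ∧ ps.length = cs.length ∧
    (∀ i j : Fin ps.length, i ≠ j → (ps.get i).root ≠ (ps.get j).root) ∧
    ∀ i : Fin ps.length, ∀ (h : (i : ℕ) < cs.length),
      G.E u (ps.get i).root ∧ G.le u (ps.get i).root = (cs.get ⟨i, h⟩).1 ∧
      isPattern G (cs.get ⟨i, h⟩).2 (ps.get i)
termination_by _ p => sizeOf p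
decreasing_by
  have h1 : sizeOf (ps.get i) < sizeOf ps := List.sizeOf_lt_of_mem (ps.get_mem i)
  simp only [VTree.node.sizeOf_spec]
  omega

/-- `psiRoot G t u` : number of tree-patterns of `G` with respect to `t` rooted at `u`. -/
noncomputable def psiRoot {A : Type} (G : LGraph A) (t : LTree A) (u : G.V) : ℕ :=
  Set.ncard {p : VTree G.V | isPattern G t p ∧ p.root = u}

/-- `psi G t` : number of tree-patterns of `G` with respect to `t`. -/
noncomputable def psi {A : Type} (G : LGraph A) (t : LTree A) : ℕ :=
  Set.ncard {p : VTree G.V | isPattern G t p}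

/-- `isWalk G w` : `w` is a walk of length `n` in `G` (consecutive vertices joined by edges). -/
def isWalk {A : Type} (G : LGraph A) {n : ℕ} (w : Fin (n + 1) → G.V) : Prop :=
  ∀ i j : Fin (n + 1), (j : ℕ) = (i : ℕ) + 1 → G.E (w i) (w j)

/-- `noTotWalk G w` : the walk `w` is no-tottering: `v_i ≠ v_{i+2}` for all `i`. -/
def noTotWalk {A : Type} (G : LGraph A) {n : ℕ} (w : Fin (n + 1) → G.V) : Prop :=
  ∀ i j : Fin (n + 1), (j : ℕ) = (i : ℕ) + 2 → w i ≠ w j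

/-- `sameLabels G1 G2 w1 w2` : the two walks are identically labeled (corresponding
vertices and edges carry the same labels). -/
def sameLabels {A : Type} (G1 G2 : LGraph A) {n : ℕ}
    (w1 : Fin (n + 1) → G1.V) (w2 : Fin (n + 1) → G2.V) : Prop :=
  (∀ i, G1.lv (w1 i) = G2.lv (w2 i)) ∧
    (∀ i j : Fin (n + 1), (j : ℕ) = (i : ℕ) + 1 → G1.le (w1 i) (w1 j) = G2.le (w2 i) (w2 j))

/-- Walk-count kernel `K^n_Walk`: number of pairs of identically labeled walks of
length `n` in `G1` and `G2`. -/
noncomputable def walkKernel {A : Type} (G1 G2 : LGraph A) (n : ℕ) : ℝ :=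
  ∑ w1 : Fin (n + 1) → G1.V, ∑ w2 : Fin (n + 1) → G2.V,
    if isWalk G1 w1 ∧ isWalk G2 w2 ∧ sameLabels G1 G2 w1 w2 then 1 else 0

/-!
A tree-pattern determines its tree, and the children of a node of a pattern sit on distinct
vertices, so only finitely many trees of depth at most `h` have a pattern in `G1`. The kernel is
therefore a polynomial in `λ`, whose value at `0` keeps only the trees with one leaf. These are the
chains; the patterns of a chain are the walks carrying its labels, so the chains of depth `n + 1`
together contribute the number of pairs of identically labelled walks of length `n`.
-/

namespace LTree

variable {A : Type}

theorem one_le_depth (t : LTree A) : 1 ≤ t.depth := by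
  cases t; simp [depth]

theorem one_le_leaves : ∀ t : LTree A, 1 ≤ t.leaves
  | .node _ [] => le_rfl
  | .node _ ((_, s) :: _) => by
    have := one_le_leaves s
    simp only [leaves, leavesList]
    omega

theorem depth_le_depthList_of_mem {cs : List (A × LTree A)} {x : A} {t : LTree A}
    (h : (x, t) ∈ cs) : t.depth ≤ depthList cs := by
  induction cs with
  | nil => simp at h
  | cons c cs ih =>
    rcases List.mem_cons.mp h with rfl | h
    · exact le_max_left _ _
    · exact (ih h).trans (le_max_right _ _)

def chain : (n : ℕ) → (Fin (n + 1) → A) → (Fin n → A) → LTree A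
  | 0, a, _ => .node (a 0) []
  | n + 1, a, e => .node (a 0) [(e 0, chain n (Fin.tail a) (Fin.tail e))]

theorem chain_inj : ∀ {n : ℕ} {a a' : Fin (n + 1) → A} {e e' : Fin n → A},
    chain n a e = chain n a' e' ↔ a = a' ∧ e = e'
  | 0, a, a', e, e' => by
    simp [chain, funext_iff, Fin.forall_fin_one, Subsingleton.elim e e']
  | n + 1, a, a', e, e' => by
    simp only [chain, node.injEq, List.cons.injEq, Prod.mk.injEq, and_true, chain_inj]
    rw [← Fin.cons_self_tail a, ← Fin.cons_self_tail a', ← Fin.cons_self_tail e,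
      ← Fin.cons_self_tail e']
    simp only [Fin.cons_inj, Fin.cons_zero, Fin.tail_cons]
    tauto

theorem depth_chain : ∀ (n : ℕ) (a : Fin (n + 1) → A) (e : Fin n → A),
    (chain n a e).depth = n + 1
  | 0, _, _ => rfl
  | n + 1, a, e => by
    simp only [chain, depth, depthList, depth_chain]
    omega

theorem leaves_chain : ∀ (n : ℕ) (a : Fin (n + 1) → A) (e : Fin n → A), (chain n a e).leaves = 1
  | 0, _, _ => rfl
  | n + 1, a, e => by simp only [chain, leaves, leavesList, leaves_chain]

theorem exists_eq_chain_of_leaves_eq_one : ∀ (n : ℕ) (t : LTree A),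
    t.leaves = 1 → t.depth = n + 1 → ∃ a e, t = chain n a e
  | 0, .node a [], _, _ => ⟨fun _ => a, Fin.elim0, rfl⟩
  | 0, .node a ((x, s) :: cs), _, hd => by
    have := s.one_le_depth
    have := depth_le_depthList_of_mem (List.mem_cons_self (a := (x, s)) (l := cs))
    simp only [depth] at hd
    omega
  | n + 1, .node a [], _, hd => by simp [depth, depthList] at hd
  | n + 1, .node a ((x, s) :: (y, s') :: cs), hl, _ => by
    have := one_le_leaves s
    have := one_le_leaves s'
    simp only [leaves, leavesList] at hl
    omega
  | n + 1, .node a [(x, s)], hl, hd => by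
    simp only [leaves, leavesList, depth, depthList] at hl hd
    obtain ⟨a', e', rfl⟩ := exists_eq_chain_of_leaves_eq_one n s (by omega) (by omega)
    exact ⟨Fin.cons a a', Fin.cons x e', rfl⟩

end LTree

namespace VTree

variable {V : Type}

def chain : (n : ℕ) → (Fin (n + 1) → V) → VTree V
  | 0, w => .node (w 0) []
  | n + 1, w => .node (w 0) [chain n (Fin.tail w)]

theorem root_chain : ∀ (n : ℕ) (w : Fin (n + 1) → V), (chain n w).root = w 0
  | 0, _ => rfl
  | _ + 1, _ => rfl

theorem chain_injective : ∀ n : ℕ, Function.Injective (chain (V := V) n)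
  | 0, w, w', h => by
    simp only [chain, node.injEq] at h
    exact funext (Fin.forall_fin_one.mpr h.1)
  | n + 1, w, w', h => by
    simp only [chain, node.injEq, List.cons.injEq, and_true] at h
    rw [← Fin.cons_self_tail w, ← Fin.cons_self_tail w', h.1, chain_injective n h.2]

end VTree

section Patterns

variable {A : Type} (G : LGraph A)

theorem isPattern_node_nil_iff {a : A} {p : VTree G.V} :
    isPattern G (.node a []) p ↔ ∃ u, p = .node u [] ∧ G.lv u = a := by
  obtain ⟨u, ps⟩ := p
  rw [isPattern]
  constructor
  · rintro ⟨hlv, hlen, -⟩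
    exact ⟨u, by simpa using hlen, hlv⟩
  · rintro ⟨u, ⟨rfl, rfl⟩, hlv⟩
    exact ⟨hlv, rfl, fun i => i.elim0, fun i => i.elim0⟩

theorem isPattern_node_singleton_iff {a x : A} {s : LTree A} {p : VTree G.V} :
    isPattern G (.node a [(x, s)]) p ↔ ∃ u q, p = .node u [q] ∧ G.lv u = a ∧
      G.E u q.root ∧ G.le u q.root = x ∧ isPattern G s q := by
  obtain ⟨u, ps⟩ := p
  rw [isPattern]
  constructor
  · rintro ⟨hlv, hlen, -, hchild⟩
    obtain ⟨q, rfl⟩ := List.length_eq_one_iff.mp hlen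
    exact ⟨u, q, rfl, hlv, hchild 0 (by simp)⟩
  · rintro ⟨u, q, ⟨rfl, rfl⟩, hlv, hq⟩
    have hsingle : ∀ i j : Fin [q].length, i = j := Subsingleton.elim (α := Fin 1)
    refine ⟨hlv, rfl, fun i j hij => absurd (hsingle i j) hij, fun i _ => ?_⟩
    obtain rfl := hsingle i 0
    exact hq

end Patterns

theorem Fin.forall_val_eq_succ_imp_iff {n : ℕ} {P : Fin (n + 1) → Fin (n + 1) → Prop} :
    (∀ i j : Fin (n + 1), (j : ℕ) = i + 1 → P i j) ↔ ∀ k : Fin n, P k.castSucc k.succ := by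
  refine ⟨fun H k => H _ _ (by simp), fun H i j hij => ?_⟩
  obtain ⟨k, rfl⟩ : ∃ k : Fin n, k.castSucc = i := ⟨⟨i, by omega⟩, rfl⟩
  obtain rfl : j = k.succ := Fin.ext (by simpa using hij)
  exact H k

section Walks

variable {A : Type}

theorem isWalk_iff {G : LGraph A} {n : ℕ} {w : Fin (n + 1) → G.V} :
    isWalk G w ↔ ∀ k : Fin n, G.E (w k.castSucc) (w k.succ) :=
  Fin.forall_val_eq_succ_imp_iff

theorem isWalk_cons {G : LGraph A} {n : ℕ} {u : G.V} {w : Fin (n + 1) → G.V} :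
    isWalk G (Fin.cons u w : Fin (n + 2) → G.V) ↔ G.E u (w 0) ∧ isWalk G w := by
  simp only [isWalk_iff, Fin.forall_fin_succ, Fin.castSucc_zero, Fin.cons_zero, Fin.cons_succ]
  rfl

def walkTree (G : LGraph A) {n : ℕ} (w : Fin (n + 1) → G.V) : LTree A :=
  LTree.chain n (G.lv ∘ w) fun k => G.le (w k.castSucc) (w k.succ)

theorem leaves_walkTree (G : LGraph A) {n : ℕ} (w : Fin (n + 1) → G.V) :
    (walkTree G w).leaves = 1 :=
  LTree.leaves_chain ..

theorem depth_walkTree (G : LGraph A) {n : ℕ} (w : Fin (n + 1) → G.V) :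
    (walkTree G w).depth = n + 1 :=
  LTree.depth_chain ..

theorem walkTree_cons (G : LGraph A) {n : ℕ} (u : G.V) (w : Fin (n + 1) → G.V) :
    walkTree G (Fin.cons u w : Fin (n + 2) → G.V) =
      .node (G.lv u) [(G.le u (w 0), walkTree G w)] := by
  simp only [walkTree, LTree.chain]
  rfl

theorem sameLabels_iff_walkTree_eq {G1 G2 : LGraph A} {n : ℕ} {w1 : Fin (n + 1) → G1.V}
    {w2 : Fin (n + 1) → G2.V} : sameLabels G1 G2 w1 w2 ↔ walkTree G1 w1 = walkTree G2 w2 := by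
  rw [walkTree, walkTree, LTree.chain_inj, sameLabels, Fin.forall_val_eq_succ_imp_iff,
    funext_iff, funext_iff]
  rfl

end Walks

section Chains

open Finset

variable {A : Type} (G : LGraph A)

theorem isPattern_chain_iff : ∀ {n : ℕ} {a : Fin (n + 1) → A} {e : Fin n → A} {p : VTree G.V},
    isPattern G (LTree.chain n a e) p ↔
      ∃ w, isWalk G w ∧ walkTree G w = LTree.chain n a e ∧ VTree.chain n w = p
  | 0, a, e, p => by
    rw [LTree.chain, isPattern_node_nil_iff]
    constructor
    · rintro ⟨u, rfl, hu⟩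
      refine ⟨fun _ => u, fun i j hij => by omega, ?_, rfl⟩
      simp [walkTree, LTree.chain, hu]
    · rintro ⟨w, -, hw, rfl⟩
      simp only [walkTree, LTree.chain, LTree.node.injEq] at hw
      exact ⟨w 0, rfl, hw.1⟩
  | n + 1, a, e, p => by
    rw [LTree.chain, isPattern_node_singleton_iff, Fin.exists_fin_succ_pi]
    simp only [isWalk_cons, walkTree_cons, VTree.chain, Fin.cons_zero, Fin.tail_cons,
      LTree.node.injEq, List.cons.injEq, Prod.mk.injEq, and_true, isPattern_chain_iff]
    constructor
    · rintro ⟨u, -, rfl, hu, hE, hle, w, hw, hwt, rfl⟩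
      rw [VTree.root_chain] at hE hle
      exact ⟨u, w, ⟨hE, hw⟩, ⟨hu, hle, hwt⟩, rfl⟩
    · rintro ⟨u, w, ⟨hE, hw⟩, ⟨hu, hle, hwt⟩, rfl⟩
      refine ⟨u, _, rfl, hu, ?_, ?_, w, hw, hwt, rfl⟩ <;> rwa [VTree.root_chain]

theorem psi_chain (n : ℕ) (a : Fin (n + 1) → A) (e : Fin n → A) :
    psi G (LTree.chain n a e) =
      #{w : Fin (n + 1) → G.V | isWalk G w ∧ walkTree G w = LTree.chain n a e} := by
  have hpatterns : {p | isPattern G (LTree.chain n a e) p} =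
      VTree.chain n '' {w | isWalk G w ∧ walkTree G w = LTree.chain n a e} := by
    ext p
    simp [isPattern_chain_iff, and_assoc]
  rw [psi, hpatterns, Set.ncard_image_of_injective _ (VTree.chain_injective n),
    ← Set.ncard_coe_finset, coe_filter_univ]

theorem psi_eq_card_walks {n : ℕ} {t : LTree A} (hl : t.leaves = 1) (hd : t.depth = n + 1) :
    psi G t = #{w : Fin (n + 1) → G.V | isWalk G w ∧ walkTree G w = t} := by
  obtain ⟨a, e, rfl⟩ := LTree.exists_eq_chain_of_leaves_eq_one n t hl hd
  exact psi_chain G n a e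

theorem psi_walkTree_ne_zero {n : ℕ} {w : Fin (n + 1) → G.V} (hw : isWalk G w) :
    psi G (walkTree G w) ≠ 0 := by
  rw [psi_eq_card_walks G (leaves_walkTree G w) (depth_walkTree G w)]
  exact card_ne_zero.mpr ⟨w, by simp [hw]⟩

end Chains

open Finset in
theorem walkKernel_eq_sum_psi_mul_psi {A : Type} (G1 G2 : LGraph A) (n : ℕ)
    (C : Finset (LTree A)) (hC : ∀ t ∈ C, t.leaves = 1 ∧ t.depth = n + 1)
    (hwalk : ∀ w : Fin (n + 1) → G1.V, isWalk G1 w → walkTree G1 w ∈ C) :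
    walkKernel G1 G2 n = ∑ t ∈ C, (psi G1 t * psi G2 t : ℝ) := by
  set pairs : Finset ((Fin (n + 1) → G1.V) × (Fin (n + 1) → G2.V)) :=
    {z | isWalk G1 z.1 ∧ isWalk G2 z.2 ∧ walkTree G1 z.1 = walkTree G2 z.2}
  have hkernel : walkKernel G1 G2 n = #pairs := by
    rw [walkKernel, ← sum_product', univ_product_univ, sum_boole]
    simp only [pairs, sameLabels_iff_walkTree_eq]
  have hfiber : ∀ t ∈ C, #{z ∈ pairs | walkTree G1 z.1 = t} = psi G1 t * psi G2 t := by
    intro t ht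
    obtain ⟨hl, hd⟩ := hC t ht
    rw [psi_eq_card_walks G1 hl hd, psi_eq_card_walks G2 hl hd, ← card_product]
    congr 1
    ext z
    simp only [pairs, mem_filter, mem_univ, true_and, mem_product]
    constructor
    · rintro ⟨⟨hw1, hw2, heq⟩, rfl⟩
      exact ⟨⟨hw1, rfl⟩, hw2, heq.symm⟩
    · rintro ⟨⟨hw1, rfl⟩, hw2, heq⟩
      exact ⟨⟨hw1, hw2, heq.symm⟩, rfl⟩
  rw [hkernel, card_eq_sum_card_fiberwise fun z hz => hwalk z.1 (mem_filter.mp hz).2.1]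
  push_cast
  exact sum_congr rfl fun t ht => mod_cast hfiber t ht

namespace VTree

variable {V : Type}

inductive Bounded (B : ℕ) : ℕ → VTree V → Prop
  | node (u : V) (ps : List (VTree V)) (d : ℕ) :
      ps.length ≤ B → (∀ q ∈ ps, Bounded B d q) → Bounded B (d + 1) (.node u ps)

theorem Bounded.mono {B d d' : ℕ} {p : VTree V} (hp : p.Bounded B d) (hd : d ≤ d') :
    p.Bounded B d' := by
  induction hp generalizing d' with
  | node u ps d hlen _ ih =>
    obtain ⟨d', rfl⟩ : ∃ d'', d' = d'' + 1 := ⟨d' - 1, by omega⟩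
    exact .node u ps d' hlen fun q hq => ih q hq (by omega)

theorem finite_setOf_bounded [Finite V] (B : ℕ) :
    ∀ d : ℕ, {p : VTree V | p.Bounded B d}.Finite
  | 0 => Set.finite_empty.subset fun p hp => by cases hp
  | d + 1 => by
    have hchildren :
        {ps : List (VTree V) | ps.length ≤ B ∧ ∀ q ∈ ps, q.Bounded B d}.Finite := by
      have := (finite_setOf_bounded B d).to_subtype
      refine ((List.finite_length_le {p : VTree V | p.Bounded B d} B).image
        (List.map Subtype.val)).subset ?_
      rintro ps ⟨hlen, hps⟩
      exact ⟨ps.attach.map fun q => ⟨q.1, hps q.1 q.2⟩, (by simpa using hlen : _ ≤ B), by simp⟩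
    refine ((Set.finite_univ.prod hchildren).image fun z => node z.1 z.2).subset ?_
    rintro _ ⟨u, ps, d, hlen, hps⟩
    exact ⟨(u, ps), ⟨trivial, hlen, hps⟩, rfl⟩

end VTree

section Finiteness

variable {A : Type} (G : LGraph A)

def patternTree : VTree G.V → LTree A
  | .node u ps => .node (G.lv u) (ps.attach.map fun q => (G.le u q.1.root, patternTree q.1))
termination_by p => sizeOf p
decreasing_by
  have := List.sizeOf_lt_of_mem q.2
  simp only [VTree.node.sizeOf_spec]
  omega

theorem eq_patternTree_of_isPattern :
    ∀ {t : LTree A} {p : VTree G.V}, isPattern G t p → t = patternTree G p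
  | .node a cs, .node u ps, hp => by
    rw [isPattern] at hp
    obtain ⟨hlv, hlen, -, hchild⟩ := hp
    rw [patternTree, hlv]
    congr 1
    refine List.ext_getElem (by simp [hlen]) fun i hcs hps => ?_
    have hps' : i < ps.length := by simpa using hps
    obtain ⟨-, hle, hpat⟩ := hchild ⟨i, hps'⟩ hcs
    simp only [List.getElem_map, List.getElem_attach]
    exact Prod.ext hle.symm (eq_patternTree_of_isPattern hpat)
termination_by _ p => sizeOf p
decreasing_by
  have := List.sizeOf_lt_of_mem (List.getElem_mem hps')
  simp only [VTree.node.sizeOf_spec]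
  omega

theorem bounded_of_isPattern :
    ∀ {t : LTree A} {p : VTree G.V}, isPattern G t p → p.Bounded (Fintype.card G.V) t.depth
  | .node a cs, .node u ps, hp => by
    rw [isPattern] at hp
    obtain ⟨-, hlen, hdistinct, hchild⟩ := hp
    rw [LTree.depth, add_comm]
    refine .node u ps _ ?_ fun q hq => ?_
    · -- the children of a node of a pattern sit on distinct vertices
      simpa using Fintype.card_le_of_injective (fun i : Fin ps.length => (ps.get i).root)
        fun i j hij => by_contra fun hne => hdistinct i j hne hij
    · obtain ⟨i, rfl⟩ := List.mem_iff_get.mp hq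
      have hcs : (i : ℕ) < cs.length := hlen ▸ i.isLt
      obtain ⟨-, -, hpat⟩ := hchild i hcs
      exact (bounded_of_isPattern hpat).mono
        (LTree.depth_le_depthList_of_mem (List.get_mem cs ⟨i, hcs⟩))
termination_by _ p => sizeOf p
decreasing_by
  have := List.sizeOf_lt_of_mem (ps.get_mem i)
  simp only [VTree.node.sizeOf_spec]
  omega

theorem finite_setOf_depth_le_psi_ne_zero (d : ℕ) :
    {t : LTree A | t.depth ≤ d ∧ psi G t ≠ 0}.Finite := by
  refine ((VTree.finite_setOf_bounded (Fintype.card G.V) d).image (patternTree G)).subset ?_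
  rintro t ⟨hd, hpsi⟩
  obtain ⟨p, hp⟩ := Set.nonempty_of_ncard_ne_zero hpsi
  exact ⟨p, (bounded_of_isPattern G hp).mono hd, (eq_patternTree_of_isPattern G hp).symm⟩

end Finiteness

open Finset in
theorem sum_zero_pow_branch_eq_sum_walkKernel {A : Type} (G1 G2 : LGraph A) (h : ℕ)
    (F : Finset (LTree A)) (hF : ∀ t, t ∈ F ↔ t.depth ≤ h ∧ psi G1 t ≠ 0) :
    ∑ t ∈ F, (0 : ℝ) ^ t.branch * psi G1 t * psi G2 t = ∑ n ∈ range h, walkKernel G1 G2 n := by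
  have hchains : ∑ t ∈ F, (0 : ℝ) ^ t.branch * psi G1 t * psi G2 t =
      ∑ t ∈ F with t.leaves = 1, (psi G1 t * psi G2 t : ℝ) := by
    rw [sum_filter]
    refine sum_congr rfl fun t _ => ?_
    have := t.one_le_leaves
    split_ifs with hl
    · simp [LTree.branch, hl]
    · simp [LTree.branch, zero_pow (show t.leaves - 1 ≠ 0 by omega)]
  rw [hchains, ← sum_fiberwise_of_maps_to (g := fun t => t.depth - 1) (t := range h)]
  · refine sum_congr rfl fun n hn => (walkKernel_eq_sum_psi_mul_psi G1 G2 n _ ?_ ?_).symm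
    · intro t ht
      simp only [mem_filter] at ht
      have := t.one_le_depth
      exact ⟨ht.1.2, by omega⟩
    · intro w hw
      have hd := depth_walkTree G1 w
      simp only [mem_filter, hF, mem_range] at hn ⊢
      exact ⟨⟨⟨by omega, psi_walkTree_ne_zero G1 hw⟩, leaves_walkTree G1 w⟩, by omega⟩
  · intro t ht
    simp only [mem_filter, hF, mem_range] at ht ⊢
    have := t.one_le_depth
    omega

/-- As `λ → 0⁺`, the until-N branching-based kernel of order `h` converges to the
sum of the walk-count kernels of lengths `0` through `h-1`. -/
theorem stmt_11 {A : Type} (G1 G2 : LGraph A) (h : ℕ) (hh : 1 ≤ h) :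
    Filter.Tendsto
      (fun lam : ℝ =>
        ∑ᶠ t ∈ {t : LTree A | 1 ≤ t.depth ∧ t.depth ≤ h},
          lam ^ t.branch * (psi G1 t : ℝ) * (psi G2 t : ℝ))
      (nhdsWithin 0 (Set.Ioi 0))
      (nhds (∑ n ∈ Finset.range h, walkKernel G1 G2 n)) := by
  set F := (finite_setOf_depth_le_psi_ne_zero G1 h).toFinset
  have hF (t : LTree A) : t ∈ F ↔ t.depth ≤ h ∧ psi G1 t ≠ 0 := Set.Finite.mem_toFinset _
  have hsum (lam : ℝ) : ∑ᶠ t ∈ {t : LTree A | 1 ≤ t.depth ∧ t.depth ≤ h},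
      lam ^ t.branch * (psi G1 t : ℝ) * (psi G2 t : ℝ) =
      ∑ t ∈ F, lam ^ t.branch * (psi G1 t : ℝ) * (psi G2 t : ℝ) := by
    refine finsum_mem_eq_sum_of_subset _ ?_ fun t ht => ⟨t.one_le_depth, ((hF t).mp ht).1⟩
    rintro t ⟨⟨-, hd⟩, hne⟩
    exact (hF t).mpr ⟨hd, fun h0 => hne (by simp [h0])⟩
  simp_rw [hsum, ← sum_zero_pow_branch_eq_sum_walkKernel G1 G2 h F hF]
  have hcont : Continuous fun lam : ℝ => ∑ t ∈ F, lam ^ t.branch * (psi G1 t : ℝ) * psi G2 t := by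
    fun_prop
  exact (hcont.tendsto 0).mono_left nhdsWithin_le_nhds
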